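/- arXiv:2306.03448 — 4 statements merged into one kernel-verified Lean document; each statement's English description precedes it below -/
import Mathlib

section
/- Let q ≥ 2, n, m̄, j be positive integers and p a prime with p not dividing q. Define f(j) := 1 + q^n + q^{2n} + ... + q^{n(m̄ - 1 + j)}. If p divides f(j), then for every positive integer k, p divides f(kj + (k-1)m̄). -/
/-! Writing `x = q ^ n`, `f i` is the geometric sum `1 + x + ⋯ + x ^ (mb + i - 1)`, and
`mb + (k * j + (k - 1) * mb) = k * (mb + j)`. A geometric sum of length `m * k` splits into `k`
blocks of length `m`, the `i`-th being `x ^ (m * i)` times the first one, so it is divisible by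
the geometric sum of length `m`. -/

open Finset

theorem geom_sum_range_mul {R : Type*} [CommSemiring R] (x : R) (m k : ℕ) :
    ∑ i ∈ range (m * k), x ^ i = (∑ i ∈ range m, x ^ i) * ∑ i ∈ range k, (x ^ m) ^ i := by
  induction k with
  | zero => simp
  | succ k ih =>
    rw [mul_add_one, sum_range_add, ih, sum_range_succ, mul_add, ← pow_mul]
    congr 1
    rw [sum_mul]
    exact sum_congr rfl fun i _ => by rw [← pow_add, add_comm]

theorem geom_sum_dvd_geom_sum_range_mul {R : Type*} [CommSemiring R] (x : R) (m k : ℕ) :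
    (∑ i ∈ range m, x ^ i) ∣ ∑ i ∈ range (m * k), x ^ i :=
  geom_sum_range_mul x m k ▸ dvd_mul_right _ _

theorem stmt2_general (q n mb j : ℕ)
    (p : ℕ)
    (f : ℕ → ℕ) (hf : ∀ i, f i = ∑ t ∈ Finset.range (mb + i), q ^ (n * t))
    (h : p ∣ f j) : ∀ k : ℕ, 0 < k → p ∣ f (k * j + (k - 1) * mb) := by
  intro k hk
  have hf_geom : ∀ i, f i = ∑ t ∈ range (mb + i), (q ^ n) ^ t := fun i => by
    simp only [hf, pow_mul]
  have hlen : mb + (k * j + (k - 1) * mb) = (mb + j) * k := by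
    obtain ⟨k, rfl⟩ := Nat.exists_eq_add_one_of_ne_zero hk.ne'
    simp only [Nat.add_sub_cancel]
    ring
  rw [hf_geom] at h ⊢
  rw [hlen]
  exact h.trans (geom_sum_dvd_geom_sum_range_mul _ _ _)

theorem stmt2 (q n mb j : ℕ) (hq : 2 ≤ q) (hn : 0 < n) (hm : 0 < mb) (hj : 0 < j)
    (p : ℕ) (hp : p.Prime) (hpq : ¬ p ∣ q)
    (f : ℕ → ℕ) (hf : ∀ i, f i = ∑ t ∈ Finset.range (mb + i), q ^ (n * t))
    (h : p ∣ f j) : ∀ k : ℕ, 0 < k → p ∣ f (k * j + (k - 1) * mb) :=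
  stmt2_general q n mb j p f hf h
end

section
/- Let F = F_{q^n} be a finite field, let I < J < n be natural numbers, set K = J - I and A = q^{2K} + q^K + 1. Let α, β, γ ∈ F* be such that α·γ^{q^K}·β^{q^K + 1} is not an A-th power in F. Then for all nonzero u, v, w ∈ F, the system γβ·w^{q^I + q^J} = v^{q^I}·u^{q^J} and γ·u^{q^I}·w^{q^J} = α·v^{q^I + q^J} has no solution. -/
/-! Write `x, y, z` for the `q^I`-th powers of `u, v, w` and `k = q^K`, so the system reads
`γβ z^(k+1) = y x^k` and `γ x z^k = α y^(k+1)`. Multiplying the second equation by `x^(k+k²)`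
makes `(y x^k)^(k+1)` appear, and substituting the first gives
`(x / z)^(k²+k+1) = α γ^k β^(k+1)`, contradicting the hypothesis. -/

theorem pow_sq_add_add_one_eq_of_system {R : Type*} [CommRing R] [IsDomain R] {α β γ x y z : R}
    (k : ℕ) (hγ : γ ≠ 0) (hz : z ≠ 0)
    (h₁ : γ * β * z ^ (k + 1) = y * x ^ k) (h₂ : γ * x * z ^ k = α * y ^ (k + 1)) :
    x ^ (k ^ 2 + k + 1) = α * γ ^ k * β ^ (k + 1) * z ^ (k ^ 2 + k + 1) := by
  refine mul_left_cancel₀ (mul_ne_zero hγ (pow_ne_zero k hz)) ?_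
  calc γ * z ^ k * x ^ (k ^ 2 + k + 1)
      = (γ * x * z ^ k) * (x ^ k * (x ^ k) ^ k) := by ring
    _ = α * ((y * x ^ k) * (y * x ^ k) ^ k) := by rw [h₂]; ring
    _ = α * ((γ * β * z ^ (k + 1)) * (γ * β * z ^ (k + 1)) ^ k) := by rw [h₁]
    _ = γ * z ^ k * (α * γ ^ k * β ^ (k + 1) * z ^ (k ^ 2 + k + 1)) := by ring

theorem stmt5_general (q I J : ℕ) (hIJ : I < J)
    (F : Type*) [Field F]
    (α β γ : F) (hγ : γ ≠ 0)
    (hK : ¬ ∃ x : F, x ^ (q ^ (2 * (J - I)) + q ^ (J - I) + 1)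
      = α * γ ^ (q ^ (J - I)) * β ^ (q ^ (J - I) + 1)) :
    ∀ u v w : F, u ≠ 0 → v ≠ 0 → w ≠ 0 →
      ¬ (γ * β * w ^ (q ^ I + q ^ J) = v ^ (q ^ I) * u ^ (q ^ J) ∧
         γ * u ^ (q ^ I) * w ^ (q ^ J) = α * v ^ (q ^ I + q ^ J)) := by
  intro u v w _ _ hw ⟨h₁, h₂⟩
  set k := q ^ (J - I)
  have hJ : q ^ J = q ^ I * k := by rw [← pow_add]; congr 1; omega
  have hsq : q ^ (2 * (J - I)) = k ^ 2 := pow_mul' q 2 (J - I)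
  rw [hJ, pow_add, pow_mul, pow_mul, ← pow_succ'] at h₁ h₂
  have hw' : w ^ q ^ I ≠ 0 := pow_ne_zero _ hw
  refine hK ⟨(u / w) ^ q ^ I, ?_⟩
  rw [hsq, div_pow, div_pow, div_eq_iff (pow_ne_zero _ hw')]
  exact pow_sq_add_add_one_eq_of_system k hγ hw' h₁ h₂

theorem stmt5 (q n I J : ℕ) (hIJ : I < J) (hJn : J < n)
    (F : Type*) [Field F] [Fintype F] (hcard : Fintype.card F = q ^ n)
    (α β γ : F) (hα : α ≠ 0) (hβ : β ≠ 0) (hγ : γ ≠ 0)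
    (hK : ¬ ∃ x : F, x ^ (q ^ (2 * (J - I)) + q ^ (J - I) + 1)
      = α * γ ^ (q ^ (J - I)) * β ^ (q ^ (J - I) + 1)) :
    ∀ u v w : F, u ≠ 0 → v ≠ 0 → w ≠ 0 →
      ¬ (γ * β * w ^ (q ^ I + q ^ J) = v ^ (q ^ I) * u ^ (q ^ J) ∧
         γ * u ^ (q ^ I) * w ^ (q ^ J) = α * v ^ (q ^ I + q ^ J)) :=
  stmt5_general q I J hIJ F α β γ hγ hK
end

section
/- Let F = F_{q^n}, I < J < n, K = J - I, A = q^{2K} + q^K + 1, and α, β, γ ∈ F*. Suppose x, y, z ∈ F with x ≠ 0 satisfy simultaneously: x^{q^I + q^J} = αβ·y^{q^J}·z^{q^I}, βγ·z^{q^I + q^J} = x^{q^J}·y^{q^I}, and γ·x^{q^I}·z^{q^J} = α·y^{q^I + q^J}. If αγ^{q^K}β^{q^K+1} is not an A-th power in F, then no such (x, y, z) exists (i.e., these three equations are contradictory). -/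
/-!
Put `X = x^{q^I}`, `Y = y^{q^I}`, `Z = z^{q^I}` and `m = q^K`, so that `w^{q^J} = (w^{q^I})^m`.
The first two equations become `X·X^m = αβ·Y^m·Z` and `βγ·Z·Z^m = X^m·Y`. Multiplying the first
by `X^{m²}` and substituting the `m`-th power of the second gives
`X^{m²+m+1} = αβ(βγ)^m · Z^{m²+m+1}`, so `X/Z` is an `A`-th root of `αγ^{q^K}β^{q^K+1}`.
-/

theorem div_pow_sq_add_add_one_eq_of_mul_pow_eq {F : Type*} [Field F] (m : ℕ) {a b X Y Z : F}
    (hX : X ≠ 0) (h₁ : X * X ^ m = a * Y ^ m * Z) (h₂ : b * (Z * Z ^ m) = X ^ m * Y) :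
    (X / Z) ^ (m ^ 2 + m + 1) = a * b ^ m := by
  have hZ : Z ≠ 0 := by
    rintro rfl
    rw [mul_zero] at h₁
    exact mul_ne_zero hX (pow_ne_zero m hX) h₁
  have h₂m : b ^ m * (Z ^ m * (Z ^ m) ^ m) = (X ^ m) ^ m * Y ^ m := by
    simpa only [mul_pow] using congrArg (· ^ m) h₂
  rw [div_pow, div_eq_iff (pow_ne_zero _ hZ)]
  linear_combination (X ^ m) ^ m * h₁ - a * Z * h₂m

theorem stmt13_general (q I J : ℕ) (hIJ : I < J)
    (F : Type*) [Field F]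
    (α β γ : F)
    (hK : ¬ ∃ x : F, x ^ (q ^ (2 * (J - I)) + q ^ (J - I) + 1)
      = α * γ ^ (q ^ (J - I)) * β ^ (q ^ (J - I) + 1)) :
    ∀ x y z : F, x ≠ 0 →
      x ^ (q ^ I + q ^ J) = α * β * y ^ (q ^ J) * z ^ (q ^ I) →
      β * γ * z ^ (q ^ I + q ^ J) = x ^ (q ^ J) * y ^ (q ^ I) →
      γ * x ^ (q ^ I) * z ^ (q ^ J) = α * y ^ (q ^ I + q ^ J) → False := by
  intro x y z hx h₁ h₂ _
  obtain ⟨K, rfl⟩ : ∃ K, J = I + K := ⟨J - I, by omega⟩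
  rw [Nat.add_sub_cancel_left, mul_comm, pow_mul] at hK
  simp only [pow_add, pow_mul] at h₁ h₂
  refine hK ⟨x ^ q ^ I / z ^ q ^ I, ?_⟩
  rw [div_pow_sq_add_add_one_eq_of_mul_pow_eq _ (pow_ne_zero _ hx) h₁ h₂]
  ring

theorem stmt13 (q n I J : ℕ) (hIJ : I < J) (hJn : J < n)
    (F : Type*) [Field F] [Fintype F] (hcard : Fintype.card F = q ^ n)
    (α β γ : F) (hα : α ≠ 0) (hβ : β ≠ 0) (hγ : γ ≠ 0)
    (hK : ¬ ∃ x : F, x ^ (q ^ (2 * (J - I)) + q ^ (J - I) + 1)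
      = α * γ ^ (q ^ (J - I)) * β ^ (q ^ (J - I) + 1)) :
    ∀ x y z : F, x ≠ 0 →
      x ^ (q ^ I + q ^ J) = α * β * y ^ (q ^ J) * z ^ (q ^ I) →
      β * γ * z ^ (q ^ I + q ^ J) = x ^ (q ^ J) * y ^ (q ^ I) →
      γ * x ^ (q ^ I) * z ^ (q ^ J) = α * y ^ (q ^ I + q ^ J) → False :=
  stmt13_general q I J hIJ F α β γ hK
end

section
/- Let F = F_{q^n}, I < J < n, K = J - I, A = q^{2K} + q^K + 1, and α, β, γ ∈ F* with gcd(I, J, n) = 1 and αγ^{q^K}β^{q^K+1} not an A-th power in F_{q^n}. Then there exist infinitely many positive integers m such that αγ^{q^K}β^{q^K+1} is not an A-th power in F_{q^{nm}}. -/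
/-!
Let `Q = q ^ n = |F|` and `A = q ^ (2K) + q ^ K + 1`, which is `≡ 1 mod q`, hence prime to `Q`.
For `m ≡ 1` modulo `totient (A (Q - 1))` we get `Q ^ m ≡ Q` modulo `A (Q - 1)`, hence
`gcd (Q ^ m - 1, A (Q - 1)) = Q - 1`. If a nonzero `x` in the field `E` of size `Q ^ m` has
`x ^ A ∈ F`, then `x` is killed both by `Q ^ m - 1` and by `A (Q - 1)`, so `x ^ (Q - 1) = 1`,
which forces `x ∈ F`. An `A`-th root in `E` of an element of `F` thus already lies in `F`.
-/

theorem Nat.gcd_pow_sub_one_mul_sub_one {Q A : ℕ} (hQ : 0 < Q) (hQA : Q.Coprime A) (k : ℕ) :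
    (Q ^ (k * (A * (Q - 1)).totient + 1) - 1).gcd (A * (Q - 1)) = Q - 1 := by
  have hcop : Q.Coprime (A * (Q - 1)) :=
    hQA.mul_right ((Nat.coprime_self_sub_right hQ).2 (Nat.coprime_one_right Q))
  have hpow : Q ^ (k * (A * (Q - 1)).totient + 1) ≡ Q [MOD A * (Q - 1)] := by
    rw [pow_succ, pow_mul']
    simpa using ((Nat.ModEq.pow_totient hcop).pow k).mul_right Q
  have hsub : Q ^ (k * (A * (Q - 1)).totient + 1) - 1 ≡ Q - 1 [MOD A * (Q - 1)] := by
    refine Nat.ModEq.add_right_cancel' 1 ?_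
    rwa [Nat.sub_add_cancel (Nat.one_le_pow _ _ hQ), Nat.sub_add_cancel hQ]
  rw [hsub.gcd_eq]
  exact Nat.gcd_eq_left (dvd_mul_left _ _)

theorem Nat.coprime_pow_two_mul_add_pow_add_one {q K : ℕ} (hK : K ≠ 0) :
    (q ^ (2 * K) + q ^ K + 1).Coprime q := by
  obtain ⟨c, hc⟩ : q ∣ q ^ (2 * K) + q ^ K :=
    dvd_add (dvd_pow_self q (by omega)) (dvd_pow_self q hK)
  rw [hc, Nat.coprime_mul_left_add_left]
  exact Nat.coprime_one_left q

open Polynomial in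
theorem RingHom.mem_range_of_pow_card_eq_self {F E : Type*} [Field F] [Fintype F] [Field E]
    (φ : F →+* E) {y : E} (hy : y ^ Fintype.card F = y) : y ∈ φ.range := by
  have hcard : 1 < Fintype.card F := Fintype.one_lt_card
  have hroots : ((X ^ Fintype.card F - X : F[X]).map φ).roots = Finset.univ.val.map φ := by
    rw [← roots_map_of_injective_of_card_eq_natDegree φ.injective,
      FiniteField.roots_X_pow_card_sub_X]
    rw [FiniteField.roots_X_pow_card_sub_X, FiniteField.X_pow_card_sub_X_natDegree_eq F hcard,
      Finset.card_val, Finset.card_univ]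
  have hmem : y ∈ ((X ^ Fintype.card F - X : F[X]).map φ).roots := by
    rw [mem_roots (map_ne_zero (FiniteField.X_pow_card_sub_X_ne_zero F hcard))]
    simp [hy]
  rw [hroots] at hmem
  obtain ⟨a, -, rfl⟩ := Multiset.mem_map.1 hmem
  exact ⟨a, rfl⟩

theorem RingHom.mem_range_of_pow_mem_range {F E : Type*} [Field F] [Fintype F] [Field E]
    [Fintype E] (φ : F →+* E) {A : ℕ}
    (hA : (Fintype.card E - 1).gcd (A * (Fintype.card F - 1)) ∣ Fintype.card F - 1)
    {x : E} (hx : x ^ A ∈ φ.range) : x ∈ φ.range := by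
  obtain rfl | hx0 := eq_or_ne x 0
  · exact zero_mem _
  obtain ⟨a, ha⟩ := hx
  have ha0 : a ≠ 0 := by
    rintro rfl
    exact hx0 (eq_zero_of_pow_eq_zero (by rw [← ha, map_zero]))
  have hE : x ^ (Fintype.card E - 1) = 1 := FiniteField.pow_card_sub_one_eq_one x hx0
  have hF : x ^ (A * (Fintype.card F - 1)) = 1 := by
    rw [pow_mul, ← ha, ← map_pow, FiniteField.pow_card_sub_one_eq_one a ha0, map_one]
  have hroot : x ^ (Fintype.card F - 1) = 1 := by
    obtain ⟨c, hc⟩ := hA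
    rw [hc, pow_mul, pow_gcd_eq_one.2 ⟨hE, hF⟩, one_pow]
  refine φ.mem_range_of_pow_card_eq_self ?_
  rw [← Nat.sub_add_cancel (Fintype.card_pos (α := F)), pow_succ, hroot, one_mul]

theorem stmt16_general (q n I J : ℕ) (hIJ : I < J)
    (F : Type) [Field F] [Fintype F] (hcard : Fintype.card F = q ^ n)
    (α β γ : F)
    (hK : ¬ ∃ x : F, x ^ (q ^ (2 * (J - I)) + q ^ (J - I) + 1)
      = α * γ ^ (q ^ (J - I)) * β ^ (q ^ (J - I) + 1)) :
    {m : ℕ | 0 < m ∧ ∀ (E : Type) [Field E] [Fintype E],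
        Fintype.card E = q ^ (n * m) → ∀ φ : F →+* E,
        ¬ ∃ x : E, x ^ (q ^ (2 * (J - I)) + q ^ (J - I) + 1)
          = φ (α * γ ^ (q ^ (J - I)) * β ^ (q ^ (J - I) + 1))}.Infinite := by
  set K := J - I
  set A := q ^ (2 * K) + q ^ K + 1
  have hqA : (q ^ n).Coprime A :=
    ((Nat.coprime_pow_two_mul_add_pow_add_one (by omega)).symm).pow_left n
  have hQ : 0 < q ^ n := hcard ▸ Fintype.card_pos
  have ht : 0 < (A * (q ^ n - 1)).totient := by
    have : 1 < q ^ n := hcard ▸ Fintype.one_lt_card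
    exact Nat.totient_pos.2 (Nat.mul_pos (by omega) (by omega))
  refine Set.infinite_of_injective_forall_mem (f := fun k ↦ k * (A * (q ^ n - 1)).totient + 1)
    (fun k l hkl ↦ Nat.eq_of_mul_eq_mul_right ht (Nat.add_right_cancel hkl))
    fun k ↦ ⟨Nat.succ_pos _, ?_⟩
  rintro E _ _ hE φ ⟨x, hx⟩
  have hgcd := Nat.gcd_pow_sub_one_mul_sub_one hQ hqA k
  obtain ⟨b, hb⟩ := φ.mem_range_of_pow_mem_range (A := A)
    (by rw [hE, hcard, pow_mul, hgcd]) ⟨_, hx.symm⟩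
  exact hK ⟨b, φ.injective (by rw [map_pow, hb, hx])⟩

theorem stmt16 (q n I J : ℕ) (hq : IsPrimePow q) (hIJ : I < J) (hJn : J < n)
    (hgcd : Nat.gcd I (Nat.gcd J n) = 1)
    (F : Type) [Field F] [Fintype F] (hcard : Fintype.card F = q ^ n)
    (α β γ : F) (hα : α ≠ 0) (hβ : β ≠ 0) (hγ : γ ≠ 0)
    (hK : ¬ ∃ x : F, x ^ (q ^ (2 * (J - I)) + q ^ (J - I) + 1)
      = α * γ ^ (q ^ (J - I)) * β ^ (q ^ (J - I) + 1)) :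
    {m : ℕ | 0 < m ∧ ∀ (E : Type) [Field E] [Fintype E],
        Fintype.card E = q ^ (n * m) → ∀ φ : F →+* E,
        ¬ ∃ x : E, x ^ (q ^ (2 * (J - I)) + q ^ (J - I) + 1)
          = φ (α * γ ^ (q ^ (J - I)) * β ^ (q ^ (J - I) + 1))}.Infinite :=
  stmt16_general q n I J hIJ F hcard α β γ hK
end
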